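/- arXiv:2108.02529 — 5 statements merged into one kernel-verified Lean document; each statement's English description precedes it below -/
import Mathlib

section
/- Let D = (P, B, I) be a 2-(v,k,λ) design and let B₁ ⊆ B be a switching set of D with associated point sets P₁, P₂ ⊆ P. Then the incidence structure D₁ = (P, B, I₁) obtained from D by switching with respect to B₁ is also a 2-(v,k,λ) design. -/
open Finset
open scoped Classical

/-- `I p b` means point `p` is incident with block `b`.  `IsDesign I v k lam` says the
incidence structure on point type `α` and block type `β` is a 2-(v,k,λ) design. -/
def IsDesign {α β : Type*} [Fintype α] [Fintype β] (I : α → β → Prop)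
    (v k lam : ℕ) : Prop :=
  Fintype.card α = v ∧ 1 < k ∧ k < v - 1 ∧
  (∀ b : β, (Finset.univ.filter fun p : α => I p b).card = k) ∧
  ∀ p q : α, p ≠ q → (Finset.univ.filter fun b : β => I p b ∧ I q b).card = lam

/-- `B₁` is a switching set with associated point sets `P₁`, `P₂`. -/
def IsSwitchingSet {α β : Type*} (I : α → β → Prop) (B₁ : Finset β)
    (P₁ P₂ : Finset α) : Prop :=
  (∀ p ∈ P₁, ∀ b ∈ B₁, ¬ I p b) ∧
  (∀ p ∈ P₂, ∀ b ∈ B₁, I p b) ∧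
  ∀ p : α, p ∉ P₁ → p ∉ P₂ →
    (B₁.filter fun b => I p b).card = (B₁.filter fun b => ¬ I p b).card

/-- The incidence relation obtained by switching with respect to `B₁`. -/
def switchInc {α β : Type*} (I : α → β → Prop) (B₁ : Finset β)
    (P₁ P₂ : Finset α) : α → β → Prop :=
  fun p b => if b ∈ B₁ ∧ p ∉ P₁ ∧ p ∉ P₂ then ¬ I p b else I p b

private lemma card_filter_split {γ : Type*} [Fintype γ] (s : Finset γ) (Q : γ → Prop)
    [DecidablePred Q] :
    (univ.filter Q).card = (s.filter Q).card + (sᶜ.filter Q).card := by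
  rw [← Finset.card_union_of_disjoint (Finset.disjoint_filter_filter disjoint_compl_right),
    ← Finset.filter_union, Finset.union_compl]

/-- Switching with respect to a switching set of a 2-(v,k,lam) design yields a
2-(v,k,lam) design. -/
theorem switching_yields_design {α β : Type*} [Fintype α] [Fintype β]
    (I : α → β → Prop) (v k lam : ℕ) (B₁ : Finset β) (P₁ P₂ : Finset α)
    (hD : IsDesign I v k lam) (hS : IsSwitchingSet I B₁ P₁ P₂) :
    IsDesign (switchInc I B₁ P₁ P₂) v k lam := by
  classical
  obtain ⟨hv, hk1, hkv, hblk, hpair⟩ := hD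
  obtain ⟨hP1, hP2, hOut⟩ := hS
  set I' := switchInc I B₁ P₁ P₂ with hI'
  -- points in P₁ ∪ P₂ keep their incidences
  have hfix : ∀ p b, (p ∈ P₁ ∨ p ∈ P₂) → (I' p b ↔ I p b) := by
    intro p b hp
    simp only [hI', switchInc]
    rcases hp with h | h
    · rw [if_neg]; tauto
    · rw [if_neg]; tauto
  have hout : ∀ p b, p ∉ P₁ → p ∉ P₂ → b ∈ B₁ → (I' p b ↔ ¬ I p b) := by
    intro p b h1 h2 hb
    simp only [hI', switchInc]; rw [if_pos ⟨hb, h1, h2⟩]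
  have hnb : ∀ p b, b ∉ B₁ → (I' p b ↔ I p b) := by
    intro p b hb; simp only [hI', switchInc]; rw [if_neg]; tauto
  -- the "outside" points
  set O : Finset α := univ.filter (fun p => p ∉ P₁ ∧ p ∉ P₂) with hO
  have hmemO : ∀ p, p ∈ O ↔ (p ∉ P₁ ∧ p ∉ P₂) := by
    intro p; simp [hO]
  have hmemOc : ∀ p, p ∈ Oᶜ ↔ (p ∈ P₁ ∨ p ∈ P₂) := by
    intro p; simp [hO]; tauto
  -- For b ∈ B₁, the incident points outside O are exactly P₂
  have hS2 : ∀ b ∈ B₁, (Oᶜ.filter fun p => I p b) = P₂ := by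
    intro b hb
    ext p
    simp only [Finset.mem_filter, hmemOc]
    constructor
    · rintro ⟨hp | hp, hI⟩
      · exact absurd hI (hP1 p hp b hb)
      · exact hp
    · intro hp; exact ⟨Or.inr hp, hP2 p hp b hb⟩
  -- For b ∈ B₁, the number of incident outside points is k - |P₂|
  have hs : ∀ b ∈ B₁, (O.filter fun p => I p b).card + P₂.card = k := by
    intro b hb
    have := card_filter_split O (fun p => I p b)
    rw [hS2 b hb] at this
    rw [← this, hblk b]
  have hst : ∀ b : β, (O.filter fun p => I p b).card + (O.filter fun p => ¬ I p b).card
      = O.card := by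
    intro b; exact Finset.card_filter_add_card_filter_not _
  -- double counting
  have hdc : ∑ b ∈ B₁, (O.filter fun p => I p b).card
      = ∑ b ∈ B₁, (O.filter fun p => ¬ I p b).card := by
    have e1 : ∀ (J : α → β → Prop) [∀ p b, Decidable (J p b)],
        ∑ b ∈ B₁, (O.filter fun p => J p b).card
        = ∑ p ∈ O, (B₁.filter fun b => J p b).card := by
      intro J _
      simp only [Finset.card_filter]
      exact Finset.sum_comm
    calc ∑ b ∈ B₁, (O.filter fun p => I p b).card
        = ∑ p ∈ O, (B₁.filter fun b => I p b).card := e1 I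
      _ = ∑ p ∈ O, (B₁.filter fun b => ¬ I p b).card := by
          refine Finset.sum_congr rfl ?_
          intro p hp
          rw [hmemO] at hp
          exact hOut p hp.1 hp.2
      _ = ∑ b ∈ B₁, (O.filter fun p => ¬ I p b).card := (e1 (fun p b => ¬ I p b)).symm
  -- key: for each block of B₁, exactly half the outside points are incident with it
  have hsame : ∀ b ∈ B₁, (O.filter fun p => I p b).card
      = (O.filter fun p => ¬ I p b).card := by
    intro b hb
    have hBpos : 0 < B₁.card := Finset.card_pos.mpr ⟨b, hb⟩
    have hsum1 : ∑ b ∈ B₁, (O.filter fun p => I p b).card + B₁.card * P₂.card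
        = B₁.card * k := by
      have : ∑ b ∈ B₁, ((O.filter fun p => I p b).card + P₂.card) = ∑ _b ∈ B₁, k :=
        Finset.sum_congr rfl (fun b hb => hs b hb)
      simpa [Finset.sum_add_distrib, Finset.sum_const, mul_comm] using this
    have hsum2 : ∑ b ∈ B₁, (O.filter fun p => I p b).card
        + ∑ b ∈ B₁, (O.filter fun p => ¬ I p b).card = B₁.card * O.card := by
      rw [← Finset.sum_add_distrib]
      have : ∑ b ∈ B₁, ((O.filter fun p => I p b).card + (O.filter fun p => ¬ I p b).card)
          = ∑ _b ∈ B₁, O.card := Finset.sum_congr rfl (fun b _ => hst b)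
      simpa [Finset.sum_const, mul_comm] using this
    -- derive 2*k = O.card + 2 * P₂.card
    have hkey : B₁.card * (2 * k) = B₁.card * (O.card + 2 * P₂.card) := by
      rw [← hdc] at hsum2
      ring_nf
      ring_nf at hsum1 hsum2
      omega
    have hk2 : 2 * k = O.card + 2 * P₂.card :=
      Nat.eq_of_mul_eq_mul_left hBpos hkey
    have h1 := hs b hb
    have h2 := hst b
    omega
  refine ⟨hv, hk1, hkv, ?_, ?_⟩
  · -- block sizes
    intro b
    by_cases hb : b ∈ B₁
    · have e0 := card_filter_split O (fun p => I' p b)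
      have e1 : O.filter (fun p => I' p b) = O.filter (fun p => ¬ I p b) := by
        apply Finset.filter_congr
        intro p hp
        rw [hmemO] at hp
        simpa using hout p b hp.1 hp.2 hb
      have e2 : Oᶜ.filter (fun p => I' p b) = Oᶜ.filter (fun p => I p b) := by
        apply Finset.filter_congr
        intro p hp
        rw [hmemOc] at hp
        simpa using hfix p b hp
      rw [e0, e1, e2, ← hsame b hb]
      have := card_filter_split O (fun p => I p b)
      rw [← this, hblk b]
    · have : (univ.filter fun p => I' p b) = univ.filter fun p => I p b := by
        apply Finset.filter_congr
        intro p _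
        simpa using hnb p b hb
      rw [this, hblk b]
  · -- pair counts
    intro p q hpq
    have hsplitB := card_filter_split B₁ (fun b => I' p b ∧ I' q b)
    have hsplitB' := card_filter_split B₁ (fun b => I p b ∧ I q b)
    have ec : B₁ᶜ.filter (fun b => I' p b ∧ I' q b) = B₁ᶜ.filter (fun b => I p b ∧ I q b) := by
      apply Finset.filter_congr
      intro b hb
      rw [Finset.mem_compl] at hb
      simp only [hnb p b hb, hnb q b hb]
    suffices hmain : (B₁.filter fun b => I' p b ∧ I' q b).card
        = (B₁.filter fun b => I p b ∧ I q b).card by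
      rw [hsplitB, hmain, ec, ← hsplitB', hpair p q hpq]
    -- produce the B₁-part equality by cases
    by_cases hp1 : p ∈ P₁
    · have z1 : B₁.filter (fun b => I' p b ∧ I' q b) = ∅ := by
        apply Finset.filter_false_of_mem
        intro b hb hc
        exact hP1 p hp1 b hb ((hfix p b (Or.inl hp1)).1 hc.1)
      have z2 : B₁.filter (fun b => I p b ∧ I q b) = ∅ := by
        apply Finset.filter_false_of_mem
        intro b hb hc
        exact hP1 p hp1 b hb hc.1
      rw [z1, z2]
    by_cases hq1 : q ∈ P₁
    · have z1 : B₁.filter (fun b => I' p b ∧ I' q b) = ∅ := by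
        apply Finset.filter_false_of_mem
        intro b hb hc
        exact hP1 q hq1 b hb ((hfix q b (Or.inl hq1)).1 hc.2)
      have z2 : B₁.filter (fun b => I p b ∧ I q b) = ∅ := by
        apply Finset.filter_false_of_mem
        intro b hb hc
        exact hP1 q hq1 b hb hc.2
      rw [z1, z2]
    by_cases hp2 : p ∈ P₂
    · -- I p b and I' p b hold on B₁
      by_cases hq2 : q ∈ P₂
      · have e : B₁.filter (fun b => I' p b ∧ I' q b) = B₁.filter (fun b => I p b ∧ I q b) := by
          apply Finset.filter_congr
          intro b hb
          simp [hfix p b (Or.inr hp2), hfix q b (Or.inr hq2)]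
        rw [e]
      · -- q outside
        have e1 : B₁.filter (fun b => I' p b ∧ I' q b) = B₁.filter (fun b => ¬ I q b) := by
          apply Finset.filter_congr
          intro b hb
          simp only [hfix p b (Or.inr hp2), hout q b hq1 hq2 hb,
            iff_iff_implies_and_implies]
          exact ⟨fun h => h.2, fun h => ⟨hP2 p hp2 b hb, h⟩⟩
        have e2 : B₁.filter (fun b => I p b ∧ I q b) = B₁.filter (fun b => I q b) := by
          apply Finset.filter_congr
          intro b hb
          simp only [iff_iff_implies_and_implies]
          exact ⟨fun h => h.2, fun h => ⟨hP2 p hp2 b hb, h⟩⟩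
        rw [e1, e2, hOut q hq1 hq2]
    by_cases hq2 : q ∈ P₂
    · -- p outside, q ∈ P₂
      have e1 : B₁.filter (fun b => I' p b ∧ I' q b) = B₁.filter (fun b => ¬ I p b) := by
        apply Finset.filter_congr
        intro b hb
        simp only [hfix q b (Or.inr hq2), hout p b hp1 hp2 hb,
          iff_iff_implies_and_implies]
        exact ⟨fun h => h.1, fun h => ⟨h, hP2 q hq2 b hb⟩⟩
      have e2 : B₁.filter (fun b => I p b ∧ I q b) = B₁.filter (fun b => I p b) := by
        apply Finset.filter_congr
        intro b hb
        simp only [iff_iff_implies_and_implies]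
        exact ⟨fun h => h.1, fun h => ⟨h, hP2 q hq2 b hb⟩⟩
      rw [e1, e2, hOut p hp1 hp2]
    -- both p and q outside: arithmetic with a,x,y,z
    · have e1 : B₁.filter (fun b => I' p b ∧ I' q b)
          = B₁.filter (fun b => ¬ I p b ∧ ¬ I q b) := by
        apply Finset.filter_congr
        intro b hb
        simp only [hout p b hp1 hp2 hb, hout q b hq1 hq2 hb]
      rw [e1]
      have hax : (B₁.filter fun b => I p b ∧ I q b).card
          + (B₁.filter fun b => I p b ∧ ¬ I q b).card
          = (B₁.filter fun b => I p b).card := by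
        rw [← Finset.filter_filter, ← Finset.filter_filter]
        exact Finset.card_filter_add_card_filter_not _
      have hyz : (B₁.filter fun b => ¬ I p b ∧ I q b).card
          + (B₁.filter fun b => ¬ I p b ∧ ¬ I q b).card
          = (B₁.filter fun b => ¬ I p b).card := by
        rw [← Finset.filter_filter, ← Finset.filter_filter]
        exact Finset.card_filter_add_card_filter_not _
      have hay : (B₁.filter fun b => I q b ∧ I p b).card
          + (B₁.filter fun b => I q b ∧ ¬ I p b).card
          = (B₁.filter fun b => I q b).card := by
        rw [← Finset.filter_filter, ← Finset.filter_filter]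
        exact Finset.card_filter_add_card_filter_not _
      have hxz : (B₁.filter fun b => ¬ I q b ∧ I p b).card
          + (B₁.filter fun b => ¬ I q b ∧ ¬ I p b).card
          = (B₁.filter fun b => ¬ I q b).card := by
        rw [← Finset.filter_filter, ← Finset.filter_filter]
        exact Finset.card_filter_add_card_filter_not _
      have c1 : (B₁.filter fun b => I q b ∧ I p b).card
          = (B₁.filter fun b => I p b ∧ I q b).card := by
        congr 1; apply Finset.filter_congr; intro b _; simp [and_comm]
      have c2 : (B₁.filter fun b => I q b ∧ ¬ I p b).card
          = (B₁.filter fun b => ¬ I p b ∧ I q b).card := by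
        congr 1; apply Finset.filter_congr; intro b _; simp [and_comm]
      have c3 : (B₁.filter fun b => ¬ I q b ∧ I p b).card
          = (B₁.filter fun b => I p b ∧ ¬ I q b).card := by
        congr 1; apply Finset.filter_congr; intro b _; simp [and_comm]
      have c4 : (B₁.filter fun b => ¬ I q b ∧ ¬ I p b).card
          = (B₁.filter fun b => ¬ I p b ∧ ¬ I q b).card := by
        congr 1; apply Finset.filter_congr; intro b _; simp [and_comm]
      have hp' := hOut p hp1 hp2
      have hq' := hOut q hq1 hq2
      omega
end

section
/- Let D = (P, B, I) be a 2-(v,k,λ) design and let B₁ ⊆ B be a switching set of D with associated point sets P₁, P₂ ⊆ P. For any two distinct points Q₁, Q₂ ∈ P \ (P₁ ∪ P₂), the number of blocks of B₁ incident with both Q₁ and Q₂ equals the number of blocks of B₁ incident with neither Q₁ nor Q₂. -/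
open Finset
open scoped Classical

/-- For two distinct points outside P₁ ∪ P₂, the number of blocks of the switching set
incident with both equals the number incident with neither. -/
theorem switching_set_pair_balance {α β : Type*} [Fintype α] [Fintype β]
    (I : α → β → Prop) (v k lam : ℕ) (B₁ : Finset β) (P₁ P₂ : Finset α)
    (hD : IsDesign I v k lam) (hS : IsSwitchingSet I B₁ P₁ P₂)
    (Q₁ Q₂ : α) (hQ : Q₁ ≠ Q₂) (hQ₁ : Q₁ ∉ P₁ ∪ P₂) (hQ₂ : Q₂ ∉ P₁ ∪ P₂) :
    (B₁.filter fun b => I Q₁ b ∧ I Q₂ b).card =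
      (B₁.filter fun b => ¬ I Q₁ b ∧ ¬ I Q₂ b).card := by
  classical
  obtain ⟨h₀, h₁', h₂⟩ := hS
  simp only [Finset.mem_union, not_or] at hQ₁ hQ₂
  have e1 := h₂ Q₁ hQ₁.1 hQ₁.2
  have e2 := h₂ Q₂ hQ₂.1 hQ₂.2
  have s1 : (B₁.filter fun b => I Q₁ b ∧ I Q₂ b).card
      + (B₁.filter fun b => I Q₁ b ∧ ¬ I Q₂ b).card
      = (B₁.filter fun b => I Q₁ b).card := by
    rw [← Finset.filter_filter, ← Finset.filter_filter,
      Finset.card_filter_add_card_filter_not]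
  have s2 : (B₁.filter fun b => ¬ I Q₁ b ∧ I Q₂ b).card
      + (B₁.filter fun b => ¬ I Q₁ b ∧ ¬ I Q₂ b).card
      = (B₁.filter fun b => ¬ I Q₁ b).card := by
    rw [← Finset.filter_filter, ← Finset.filter_filter,
      Finset.card_filter_add_card_filter_not]
  have s3 : (B₁.filter fun b => I Q₁ b ∧ I Q₂ b).card
      + (B₁.filter fun b => ¬ I Q₁ b ∧ I Q₂ b).card
      = (B₁.filter fun b => I Q₂ b).card := by
    rw [show (B₁.filter fun b => I Q₁ b ∧ I Q₂ b) = (B₁.filter fun b => I Q₂ b ∧ I Q₁ b)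
        from Finset.filter_congr (by intro b _; exact and_comm),
      show (B₁.filter fun b => ¬ I Q₁ b ∧ I Q₂ b) = (B₁.filter fun b => I Q₂ b ∧ ¬ I Q₁ b)
        from Finset.filter_congr (by intro b _; exact and_comm),
      ← Finset.filter_filter, ← Finset.filter_filter,
      Finset.card_filter_add_card_filter_not]
  have s4 : (B₁.filter fun b => I Q₁ b ∧ ¬ I Q₂ b).card
      + (B₁.filter fun b => ¬ I Q₁ b ∧ ¬ I Q₂ b).card
      = (B₁.filter fun b => ¬ I Q₂ b).card := by
    rw [show (B₁.filter fun b => I Q₁ b ∧ ¬ I Q₂ b) = (B₁.filter fun b => ¬ I Q₂ b ∧ I Q₁ b)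
        from Finset.filter_congr (by intro b _; exact and_comm),
      show (B₁.filter fun b => ¬ I Q₁ b ∧ ¬ I Q₂ b) = (B₁.filter fun b => ¬ I Q₂ b ∧ ¬ I Q₁ b)
        from Finset.filter_congr (by intro b _; exact and_comm),
      ← Finset.filter_filter, ← Finset.filter_filter,
      Finset.card_filter_add_card_filter_not]
  omega
end

section
/- Let D = (P, B, I) be a symmetric 2-(v,k,λ) design and let B₁ ⊆ B be a nonempty switching set of D with associated point sets P₁, P₂ ⊆ P. Then every point of P \ (P₁ ∪ P₂) is incident with exactly |B₁|/2 blocks of B₁, and any two distinct blocks of B₁ are both incident with exactly λ − |P₂| points of P \ (P₁ ∪ P₂). Consequently, the incidence structure with point set B₁ and block set P \ (P₁ ∪ P₂), in which a point B ∈ B₁ lies on a block Q ∈ P \ (P₁ ∪ P₂) if and only if Q is incident with B in D, is a 2-design (a subdesign of the dual of D) whenever |B₁| ≥ 2, with every block of size |B₁|/2 and every two distinct points on exactly λ − |P₂| common blocks. -/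
open Finset
open scoped Classical

lemma double_count {α β : Type*} (S : Finset α) (T : Finset β) (R : α → β → Prop) :
    ∑ a ∈ S, (T.filter fun b => R a b).card = ∑ b ∈ T, (S.filter fun a => R a b).card := by
  simp only [Finset.card_filter]
  exact Finset.sum_comm

section main
variable {α β : Type*} [Fintype α] [Fintype β] (I : α → β → Prop) (v k lam : ℕ)

lemma repl (hD : IsDesign I v k lam) (p : α) :
    (univ.filter fun b : β => I p b).card * (k - 1) = lam * (v - 1) := by
  obtain ⟨hv, hk, hkv, hblk, hpair⟩ := hD
  have key := double_count (univ.erase p) (univ.filter fun b : β => I p b) (fun q b => I q b)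
  have L : ∑ q ∈ univ.erase p, ((univ.filter fun b : β => I p b).filter fun b => I q b).card
      = (v - 1) * lam := by
    rw [Finset.sum_congr rfl fun q hq => ?_, Finset.sum_const, smul_eq_mul,
      Finset.card_erase_of_mem (mem_univ p), Finset.card_univ, hv]
    rw [Finset.filter_filter]
    exact hpair p q (Ne.symm (Finset.ne_of_mem_erase hq))
  have R : ∑ b ∈ (univ.filter fun b : β => I p b), ((univ.erase p).filter fun q => I q b).card
      = (univ.filter fun b : β => I p b).card * (k - 1) := by
    rw [Finset.sum_congr rfl fun b hb => ?_, Finset.sum_const, smul_eq_mul]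
    rw [Finset.filter_erase, Finset.card_erase_of_mem, hblk b]
    exact Finset.mem_filter.2 ⟨mem_univ p, (Finset.mem_filter.1 hb).2⟩
  rw [← R, ← key, L]; ring

lemma lam_eq (hD : IsDesign I v k lam) (hsym : Fintype.card β = Fintype.card α) :
    lam * (v - 1) = k * (k - 1) ∧ ∀ p : α, (univ.filter fun b : β => I p b).card = k := by
  obtain ⟨hv, hk, hkv, hblk, hpair⟩ := hD
  have hv4 : 4 ≤ v := by omega
  have key := double_count (univ : Finset α) (univ : Finset β) I
  have R : ∑ b : β, ((univ : Finset α).filter fun q => I q b).card = v * k := by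
    rw [Finset.sum_congr rfl fun b _ => hblk b, Finset.sum_const, smul_eq_mul,
      Finset.card_univ, hsym, hv]
  have hsum : ∑ p : α, (univ.filter fun b : β => I p b).card = v * k := by rw [key, R]
  have h1 : v * (lam * (v - 1)) = v * (k * (k - 1)) := by
    have := Finset.sum_congr rfl fun p (_ : p ∈ (univ : Finset α)) =>
      repl I v k lam ⟨hv, hk, hkv, hblk, hpair⟩ p
    rw [Finset.sum_const, smul_eq_mul, Finset.card_univ, hv] at this
    rw [← this, ← Finset.sum_mul, hsum]; ring
  have hlv : lam * (v - 1) = k * (k - 1) := by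
    have : v ≠ 0 := by omega
    exact Nat.eq_of_mul_eq_mul_left (by omega) h1
  refine ⟨hlv, fun p => ?_⟩
  have := repl I v k lam ⟨hv, hk, hkv, hblk, hpair⟩ p
  rw [hlv] at this
  exact Nat.eq_of_mul_eq_mul_right (by omega) this

end main

section main2
variable {α β : Type*} [Fintype α] [Fintype β] (I : α → β → Prop) (v k lam : ℕ)

lemma block_inter (hD : IsDesign I v k lam) (hsym : Fintype.card β = Fintype.card α)
    {b b' : β} (hbb : b' ≠ b) :
    (univ.filter fun p : α => I p b ∧ I p b').card = lam := by
  obtain ⟨hlv, hrep⟩ := lam_eq I v k lam hD hsym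
  obtain ⟨hv, hk, hkv, hblk, hpair⟩ := hD
  have hv4 : 4 ≤ v := by omega
  have hlam : 1 ≤ lam := by
    obtain ⟨p, hp, q, hq, hpq⟩ := Finset.one_lt_card.1
      (by rw [hblk b]; omega : 1 < (univ.filter fun p : α => I p b).card)
    have hb : b ∈ univ.filter fun c : β => I p c ∧ I q c :=
      Finset.mem_filter.2 ⟨mem_univ b, (Finset.mem_filter.1 hp).2, (Finset.mem_filter.1 hq).2⟩
    have := Finset.card_pos.2 ⟨b, hb⟩
    rwa [hpair p q hpq] at this
  set Pb := univ.filter fun p : α => I p b with hPb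
  set T := (univ : Finset β).erase b with hT
  set x : β → ℕ := fun c => (univ.filter fun p : α => I p b ∧ I p c).card with hx
  have hmemb : ∀ p ∈ Pb, b ∈ univ.filter fun c : β => I p c := fun p hp =>
    Finset.mem_filter.2 ⟨mem_univ b, (Finset.mem_filter.1 hp).2⟩
  have hcount1 : ∑ c ∈ T, x c = k * (k - 1) := by
    have key := double_count Pb T (fun p c => I p c)
    have L : ∑ p ∈ Pb, (T.filter fun c => I p c).card = k * (k - 1) := by
      rw [Finset.sum_congr rfl fun p hp => ?_, Finset.sum_const, smul_eq_mul, hblk b]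
      rw [hT, Finset.filter_erase, Finset.card_erase_of_mem (hmemb p hp), hrep p]
    rw [← L, key]
    exact Finset.sum_congr rfl fun c hc => by rw [hPb, Finset.filter_filter]
  have hcount2 : ∑ c ∈ T, x c * x c = k * ((k - 1) * lam) := by
    have key : ∑ pq ∈ Pb ×ˢ Pb, (T.filter fun c => I pq.1 c ∧ I pq.2 c).card
        = ∑ c ∈ T, ((Pb ×ˢ Pb).filter fun pq => I pq.1 c ∧ I pq.2 c).card := by
      simp only [Finset.card_filter]; exact Finset.sum_comm
    have L : ∑ pq ∈ Pb ×ˢ Pb, (T.filter fun c => I pq.1 c ∧ I pq.2 c).card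
        = k * ((k - 1) * lam) := by
      rw [Finset.sum_product]
      rw [Finset.sum_congr rfl fun p hp => ?_, Finset.sum_const, smul_eq_mul, hblk b]
      rw [← Finset.add_sum_erase _ _ hp]
      have hdiag : (T.filter fun c => I p c ∧ I p c).card = k - 1 := by
        have he : (T.filter fun c => I p c ∧ I p c) = T.filter fun c => I p c :=
          Finset.filter_congr fun c _ => by simp
        rw [he, hT, Finset.filter_erase, Finset.card_erase_of_mem (hmemb p hp), hrep p]
      have hoff : ∀ q ∈ Pb.erase p, (T.filter fun c => I p c ∧ I q c).card = lam - 1 := by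
        intro q hq
        rw [hT, Finset.filter_erase, Finset.card_erase_of_mem,
          hpair p q (Ne.symm (Finset.ne_of_mem_erase hq))]
        exact Finset.mem_filter.2 ⟨mem_univ b, (Finset.mem_filter.1 hp).2,
          (Finset.mem_filter.1 (Finset.mem_of_mem_erase hq)).2⟩
      rw [hdiag, Finset.sum_congr rfl hoff, Finset.sum_const, smul_eq_mul,
        Finset.card_erase_of_mem hp, hblk b]
      obtain ⟨n, rfl⟩ : ∃ n, lam = n + 1 := ⟨lam - 1, by omega⟩
      obtain ⟨m, rfl⟩ : ∃ m, k = m + 1 := ⟨k - 1, by omega⟩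
      simp [Nat.add_sub_cancel]; ring
    rw [← L, key]
    refine Finset.sum_congr rfl fun c hc => ?_
    have hprod : ((Pb ×ˢ Pb).filter fun pq => I pq.1 c ∧ I pq.2 c)
        = (Pb.filter fun p => I p c) ×ˢ (Pb.filter fun p => I p c) := by
      ext pq
      simp only [Finset.mem_filter, Finset.mem_product]
      tauto
    have hxc : (Pb.filter fun p => I p c).card = x c := by
      rw [hx]; congr 1; ext q; simp [hPb, Finset.mem_filter]
    rw [hprod, Finset.card_product, hxc]
  -- variance argument in ℤ
  have hTcard : T.card = v - 1 := by
    rw [hT, Finset.card_erase_of_mem (mem_univ b), Finset.card_univ, hsym, hv]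
  have hvar : ∑ c ∈ T, ((x c : ℤ) - lam) ^ 2 = 0 := by
    have expand : ∀ c : β, ((x c : ℤ) - lam) ^ 2
        = (x c * x c : ℕ) - 2 * lam * (x c : ℕ) + (lam : ℤ) ^ 2 := by
      intro c; push_cast; ring
    rw [Finset.sum_congr rfl fun c _ => expand c, Finset.sum_add_distrib,
      Finset.sum_sub_distrib, ← Nat.cast_sum, ← Finset.mul_sum, ← Nat.cast_sum,
      hcount1, hcount2, Finset.sum_const, hTcard, nsmul_eq_mul]
    have h1 : ((lam : ℤ)) * ((v : ℤ) - 1) = (k : ℤ) * ((k : ℤ) - 1) := by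
      have h := congrArg (Nat.cast : ℕ → ℤ) hlv
      push_cast [Nat.cast_sub (by omega : 1 ≤ v), Nat.cast_sub (by omega : 1 ≤ k)] at h
      exact h
    have h2 : ((v - 1 : ℕ) : ℤ) = (v : ℤ) - 1 := by
      rw [Nat.cast_sub (by omega : 1 ≤ v)]; norm_num
    have h3 : ((k - 1 : ℕ) : ℤ) = (k : ℤ) - 1 := by
      rw [Nat.cast_sub (by omega : 1 ≤ k)]; norm_num
    push_cast [h2, h3]
    nlinarith [h1]
  have := (Finset.sum_eq_zero_iff_of_nonneg fun c _ => sq_nonneg ((x c : ℤ) - lam)).1 hvar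
    b' (Finset.mem_erase.2 ⟨hbb, mem_univ b'⟩)
  have hx' : (x b' : ℤ) = lam := by
    have := pow_eq_zero_iff (n := 2) (by norm_num) |>.1 this
    linarith
  exact_mod_cast hx'

end main2

/-- In a symmetric 2-(v,k,lam) design, the blocks of a nonempty switching set B₁, as
points, together with the points outside P₁ ∪ P₂, as blocks (with the inherited
incidence), form a 2-design (a subdesign of the dual): every point outside P₁ ∪ P₂
lies on exactly |B₁|/2 blocks of B₁, and any two distinct blocks of B₁ are both
incident with exactly lam - |P₂| points outside P₁ ∪ P₂. -/
theorem switching_set_dual_subdesign {α β : Type*} [Fintype α] [Fintype β]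
    (I : α → β → Prop) (v k lam : ℕ) (B₁ : Finset β) (P₁ P₂ : Finset α)
    (hD : IsDesign I v k lam) (hsym : Fintype.card β = Fintype.card α)
    (hne : B₁.Nonempty) (hS : IsSwitchingSet I B₁ P₁ P₂) :
    (∀ p : α, p ∉ P₁ → p ∉ P₂ →
      (B₁.filter fun b => I p b).card = B₁.card / 2) ∧
    (∀ b ∈ B₁, ∀ b' ∈ B₁, b ≠ b' →
      ((Finset.univ \ (P₁ ∪ P₂)).filter fun p : α => I p b ∧ I p b').card
        = lam - P₂.card) := by
  obtain ⟨hP₁, hP₂, hhalf⟩ := hS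
  constructor
  · intro p hp1 hp2
    have h := hhalf p hp1 hp2
    have hsplit := Finset.card_filter_add_card_filter_not
      (s := B₁) (p := fun b => I p b)
    omega
  · intro b hb b' hb' hbb
    set A := univ.filter fun p : α => I p b ∧ I p b' with hA
    have hAcard : A.card = lam := block_inter I v k lam hD hsym hbb.symm
    have hP₂A : P₂ ⊆ A := fun p hp =>
      Finset.mem_filter.2 ⟨mem_univ p, hP₂ p hp b hb, hP₂ p hp b' hb'⟩
    have heq : ((univ \ (P₁ ∪ P₂)).filter fun p : α => I p b ∧ I p b') = A \ P₂ := by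
      ext p
      simp only [hA, Finset.mem_filter, Finset.mem_sdiff, Finset.mem_union, mem_univ,
        true_and]
      constructor
      · rintro ⟨h12, h3⟩; exact ⟨h3, fun h2 => h12 (Or.inr h2)⟩
      · rintro ⟨h3, h2⟩
        exact ⟨fun h => h.elim (fun h1 => hP₁ p h1 b hb h3.1) h2, h3⟩
    rw [heq, Finset.card_sdiff_of_subset hP₂A, hAcard]
end

section
/- Let n be a positive integer, let H be a Bush-type Hadamard matrix of order 4n² with blocks H_{i,j} (1 ≤ i, j ≤ 2n), and fix an index i₀ with 1 ≤ i₀ ≤ 2n. Define the matrix H' with blocks H'_{i₀,j} = −H_{i₀,j} for all j ≠ i₀ and H'_{i,j} = H_{i,j} for all other pairs (i,j). Then H' is again a Bush-type Hadamard matrix of order 4n². (Equivalently, the 2n blocks of the corresponding Menon design indexed by block-row i₀ form a switching set, and switching with respect to it yields a design that again corresponds to a Bush-type Hadamard matrix.) -/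
open Matrix Finset

/-- A Hadamard matrix: entries ±1 and pairwise orthogonal rows and columns. -/
def IsHadamardMatrix {m : Type*} [Fintype m] [DecidableEq m] (H : Matrix m m ℤ) : Prop :=
  (∀ i j, H i j = 1 ∨ H i j = -1) ∧
  H * Hᵀ = (Fintype.card m : ℤ) • (1 : Matrix m m ℤ) ∧
  Hᵀ * H = (Fintype.card m : ℤ) • (1 : Matrix m m ℤ)

/-- A Bush-type Hadamard matrix of order 4n²: a Hadamard matrix of order 4n², viewed as a
2n × 2n array of 2n × 2n blocks (rows and columns indexed by pairs, the first coordinate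
giving the block index), whose diagonal blocks are all-ones matrices and whose
off-diagonal blocks have all row sums and all column sums equal to 0. -/
def IsBushType (n : ℕ)
    (H : Matrix (Fin (2 * n) × Fin (2 * n)) (Fin (2 * n) × Fin (2 * n)) ℤ) : Prop :=
  IsHadamardMatrix H ∧
  (∀ i a b : Fin (2 * n), H (i, a) (i, b) = 1) ∧
  ∀ i j : Fin (2 * n), i ≠ j →
    (∀ a : Fin (2 * n), ∑ b : Fin (2 * n), H (i, a) (j, b) = 0) ∧
    (∀ b : Fin (2 * n), ∑ a : Fin (2 * n), H (i, a) (j, b) = 0)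

/-- Negating all off-diagonal blocks in one block-row of a Bush-type Hadamard matrix of
order 4n² yields again a Bush-type Hadamard matrix of order 4n². -/
theorem bushType_switch_one_row (n : ℕ) (hn : 0 < n)
    (H : Matrix (Fin (2 * n) × Fin (2 * n)) (Fin (2 * n) × Fin (2 * n)) ℤ)
    (hH : IsBushType n H) (i₀ : Fin (2 * n))
    (H' : Matrix (Fin (2 * n) × Fin (2 * n)) (Fin (2 * n) × Fin (2 * n)) ℤ)
    (hH' : ∀ r c, H' r c = if r.1 = i₀ ∧ c.1 ≠ i₀ then - H r c else H r c) :
    IsBushType n H' := by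
  obtain ⟨⟨hpm, hrow, hcol⟩, hdiag, hoff⟩ := hH
  set M : ℤ := (Fintype.card (Fin (2 * n) × Fin (2 * n)) : ℤ) with hM
  have Hrow : ∀ r s, ∑ c, H r c * H s c = if r = s then M else 0 := by
    intro r s
    have := congrFun (congrFun hrow r) s
    simpa [Matrix.mul_apply, Matrix.one_apply, mul_ite, mul_one, mul_zero] using this
  have Hcol : ∀ c d, ∑ r, H r c * H r d = if c = d then M else 0 := by
    intro c d
    have := congrFun (congrFun hcol c) d
    simpa [Matrix.mul_apply, Matrix.one_apply, mul_ite, mul_one, mul_zero] using this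
  refine ⟨⟨?_, ?_, ?_⟩, ?_, ?_⟩
  · intro r c
    rw [hH']
    split_ifs
    · rcases hpm r c with h | h <;> simp [h]
    · exact hpm r c
  · -- H' * H'ᵀ
    ext r s
    simp only [Matrix.mul_apply, Matrix.transpose_apply, Matrix.smul_apply,
      Matrix.one_apply, smul_eq_mul, mul_ite, mul_one, mul_zero]
    by_cases h1 : r.1 = i₀ <;> by_cases h2 : s.1 = i₀
    · have heq : ∀ c : Fin (2 * n) × Fin (2 * n), H' r c * H' s c = H r c * H s c := by
        intro c; rw [hH', hH']; by_cases hc : c.1 = i₀ <;> simp [hc, h1, h2]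
      rw [Finset.sum_congr rfl (fun c _ => heq c)]
      exact Hrow r s
    · -- r in block row i₀, s not
      have hne : r ≠ s := fun h => h2 (h ▸ h1)
      rw [if_neg hne]
      have expand : ∀ c : Fin (2 * n) × Fin (2 * n), H' r c * H' s c
          = 2 * (if c.1 = i₀ then H r c * H s c else 0) - H r c * H s c := by
        intro c
        rw [hH', hH']
        by_cases hc : c.1 = i₀ <;> simp [hc, h1, h2] <;> ring
      rw [Finset.sum_congr rfl (fun c _ => expand c), Finset.sum_sub_distrib,
        ← Finset.mul_sum, Hrow r s, if_neg hne]
      have key : ∑ c : Fin (2 * n) × Fin (2 * n),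
          (if c.1 = i₀ then H r c * H s c else 0) = ∑ b, H r (i₀, b) * H s (i₀, b) := by
        rw [Fintype.sum_prod_type]
        rw [Finset.sum_eq_single i₀ (fun x _ hx => by simp [hx]) (by simp)]
        simp
      have hone : ∀ b, H r (i₀, b) = 1 := by
        intro b
        conv_lhs => rw [show r = (i₀, r.2) from Prod.ext h1 rfl]
        exact hdiag i₀ r.2 b
      rw [key]
      simp only [hone, one_mul]
      rw [(hoff s.1 i₀ (fun h => h2 h)).1 s.2]
      ring
    · -- s in block row i₀, r not
      have hne : r ≠ s := fun h => h1 (h ▸ h2)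
      rw [if_neg hne]
      have expand : ∀ c : Fin (2 * n) × Fin (2 * n), H' r c * H' s c
          = 2 * (if c.1 = i₀ then H r c * H s c else 0) - H r c * H s c := by
        intro c
        rw [hH', hH']
        by_cases hc : c.1 = i₀ <;> simp [hc, h1, h2] <;> ring
      rw [Finset.sum_congr rfl (fun c _ => expand c), Finset.sum_sub_distrib,
        ← Finset.mul_sum, Hrow r s, if_neg hne]
      have key : ∑ c : Fin (2 * n) × Fin (2 * n),
          (if c.1 = i₀ then H r c * H s c else 0) = ∑ b, H r (i₀, b) * H s (i₀, b) := by
        rw [Fintype.sum_prod_type]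
        rw [Finset.sum_eq_single i₀ (fun x _ hx => by simp [hx]) (by simp)]
        simp
      have hone : ∀ b, H s (i₀, b) = 1 := by
        intro b
        conv_lhs => rw [show s = (i₀, s.2) from Prod.ext h2 rfl]
        exact hdiag i₀ s.2 b
      rw [key]
      simp only [hone, mul_one]
      rw [(hoff r.1 i₀ (fun h => h1 h)).1 r.2]
      ring
    · have heq : ∀ c : Fin (2 * n) × Fin (2 * n), H' r c * H' s c = H r c * H s c := by
        intro c; rw [hH', hH']; by_cases hc : c.1 = i₀ <;> simp [hc, h1, h2]
      rw [Finset.sum_congr rfl (fun c _ => heq c)]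
      exact Hrow r s
  · -- H'ᵀ * H'
    ext c d
    simp only [Matrix.mul_apply, Matrix.transpose_apply, Matrix.smul_apply,
      Matrix.one_apply, smul_eq_mul, mul_ite, mul_one, mul_zero]
    by_cases h1 : c.1 = i₀ <;> by_cases h2 : d.1 = i₀
    · have heq : ∀ r : Fin (2 * n) × Fin (2 * n), H' r c * H' r d = H r c * H r d := by
        intro r; rw [hH' r c, hH' r d]; by_cases hr : r.1 = i₀ <;> simp [hr, h1, h2]
      rw [Finset.sum_congr rfl (fun r _ => heq r)]
      exact Hcol c d
    · -- c in block column i₀, d not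
      have hne : c ≠ d := fun h => h2 (h ▸ h1)
      rw [if_neg hne]
      have expand : ∀ r : Fin (2 * n) × Fin (2 * n), H' r c * H' r d
          = H r c * H r d - 2 * (if r.1 = i₀ then H r c * H r d else 0) := by
        intro r
        rw [hH' r c, hH' r d]
        by_cases hr : r.1 = i₀ <;> simp [hr, h1, h2] <;> ring
      rw [Finset.sum_congr rfl (fun r _ => expand r), Finset.sum_sub_distrib,
        ← Finset.mul_sum, Hcol c d, if_neg hne]
      have key : ∑ r : Fin (2 * n) × Fin (2 * n),
          (if r.1 = i₀ then H r c * H r d else 0) = ∑ a, H (i₀, a) c * H (i₀, a) d := by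
        rw [Fintype.sum_prod_type]
        rw [Finset.sum_eq_single i₀ (fun x _ hx => by simp [hx]) (by simp)]
        simp
      have hone : ∀ a, H (i₀, a) c = 1 := by
        intro a
        conv_lhs => rw [show c = (i₀, c.2) from Prod.ext h1 rfl]
        exact hdiag i₀ a c.2
      rw [key]
      simp only [hone, one_mul]
      rw [(hoff i₀ d.1 (fun h => h2 h.symm)).2 d.2]
      ring
    · -- d in block column i₀, c not
      have hne : c ≠ d := fun h => h1 (h ▸ h2)
      rw [if_neg hne]
      have expand : ∀ r : Fin (2 * n) × Fin (2 * n), H' r c * H' r d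
          = H r c * H r d - 2 * (if r.1 = i₀ then H r c * H r d else 0) := by
        intro r
        rw [hH' r c, hH' r d]
        by_cases hr : r.1 = i₀ <;> simp [hr, h1, h2] <;> ring
      rw [Finset.sum_congr rfl (fun r _ => expand r), Finset.sum_sub_distrib,
        ← Finset.mul_sum, Hcol c d, if_neg hne]
      have key : ∑ r : Fin (2 * n) × Fin (2 * n),
          (if r.1 = i₀ then H r c * H r d else 0) = ∑ a, H (i₀, a) c * H (i₀, a) d := by
        rw [Fintype.sum_prod_type]
        rw [Finset.sum_eq_single i₀ (fun x _ hx => by simp [hx]) (by simp)]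
        simp
      have hone : ∀ a, H (i₀, a) d = 1 := by
        intro a
        conv_lhs => rw [show d = (i₀, d.2) from Prod.ext h2 rfl]
        exact hdiag i₀ a d.2
      rw [key]
      simp only [hone, mul_one]
      rw [(hoff i₀ c.1 (fun h => h1 h.symm)).2 c.2]
      ring
    · have heq : ∀ r : Fin (2 * n) × Fin (2 * n), H' r c * H' r d = H r c * H r d := by
        intro r; rw [hH' r c, hH' r d]; by_cases hr : r.1 = i₀ <;> simp [hr, h1, h2]
      rw [Finset.sum_congr rfl (fun r _ => heq r)]
      exact Hcol c d
  · -- diagonal blocks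
    intro i a b
    rw [hH']
    simp only [ne_eq]
    rw [if_neg (by tauto)]
    exact hdiag i a b
  · -- off-diagonal block sums
    intro i j hij
    constructor
    · intro a
      by_cases hP : i = i₀ ∧ ¬(j = i₀)
      · obtain ⟨hi, hj⟩ := hP
        subst hi
        simp [hH', hj, Finset.sum_neg_distrib, (hoff i j hij).1 a]
      · simp only [hH', ne_eq, hP, if_false]
        exact (hoff i j hij).1 a
    · intro b
      by_cases hP : i = i₀ ∧ ¬(j = i₀)
      · obtain ⟨hi, hj⟩ := hP
        subst hi
        simp [hH', hj, Finset.sum_neg_distrib, (hoff i j hij).2 b]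
      · simp only [hH', ne_eq, hP, if_false]
        exact (hoff i j hij).2 b
end

section
/- Let n be a positive integer, let H be a Bush-type Hadamard matrix of order 4n², and let S ⊆ {1, …, 2n} be any subset of block-row indices. Define the matrix H^S with blocks H^S_{i,j} = −H_{i,j} whenever i ∈ S and j ≠ i, and H^S_{i,j} = H_{i,j} otherwise. Then H^S is again a Bush-type Hadamard matrix of order 4n²; in particular, each of the 2n diagonal blocks of the Menon design corresponding to H determines a switching set, and the 2^{2n} resulting matrices (over all subsets S) are all Bush-type Hadamard matrices. -/
open Matrix Finset

/-- For any set S of block-row indices, negating all off-diagonal blocks in the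
block-rows indexed by S of a Bush-type Hadamard matrix of order 4n² yields again a
Bush-type Hadamard matrix of order 4n²; in particular each of the 2n diagonal blocks of
the corresponding Menon design determines a switching set, and all 2^(2n) resulting
matrices are Bush-type Hadamard matrices. -/
theorem bushType_switch_rows (n : ℕ) (hn : 0 < n)
    (H : Matrix (Fin (2 * n) × Fin (2 * n)) (Fin (2 * n) × Fin (2 * n)) ℤ)
    (hH : IsBushType n H) (S : Finset (Fin (2 * n)))
    (HS : Matrix (Fin (2 * n) × Fin (2 * n)) (Fin (2 * n) × Fin (2 * n)) ℤ)
    (hHS : ∀ r c, HS r c = if r.1 ∈ S ∧ c.1 ≠ r.1 then - H r c else H r c) :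
    IsBushType n HS := by
  obtain ⟨⟨hpm, hrow, hcol⟩, hdiag, hoff⟩ := hH
  -- the sign function
  set s : Fin (2 * n) → ℤ := fun i => if i ∈ S then -1 else 1 with hs_def
  have hs2 : ∀ i, s i * s i = 1 := by
    intro i
    simp only [s]
    split <;> norm_num
  -- key decomposition of HS
  have hkey : ∀ r c, HS r c = s r.1 * H r c + (if c.1 = r.1 then 1 - s r.1 else 0) := by
    intro r c
    rw [hHS]
    by_cases h : c.1 = r.1
    · have hnc : ¬ (r.1 ∈ S ∧ c.1 ≠ r.1) := by simp [h]
      rw [if_neg hnc, if_pos h]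
      have hH1 : H r c = 1 := by
        have := hdiag r.1 r.2 c.2
        have hc : c = (r.1, c.2) := by
          rw [← h]
        rw [hc]
        exact this
      rw [hH1]; ring
    · rw [if_neg h]
      simp only [s]
      by_cases hm : r.1 ∈ S
      · rw [if_pos ⟨hm, h⟩, if_pos hm]; ring
      · rw [if_neg (fun hc => hm hc.1), if_neg hm]; ring
  -- row sums of blocks of H
  have hrowsum : ∀ (r : Fin (2 * n) × Fin (2 * n)) (j : Fin (2 * n)),
      ∑ b : Fin (2 * n), H r (j, b) = if r.1 = j then (2 * n : ℤ) else 0 := by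
    intro r j
    by_cases h : r.1 = j
    · rw [if_pos h]
      have h1 : ∀ b : Fin (2 * n), H r (j, b) = 1 := by
        intro b
        have := hdiag r.1 r.2 b
        rw [← h]
        exact this
      simp [h1]
    · rw [if_neg h]
      exact (hoff r.1 j h).1 r.2
  -- column sums of blocks of H
  have hcolsum : ∀ (i : Fin (2 * n)) (c : Fin (2 * n) × Fin (2 * n)),
      ∑ a : Fin (2 * n), H (i, a) c = if i = c.1 then (2 * n : ℤ) else 0 := by
    intro i c
    by_cases h : i = c.1
    · rw [if_pos h]
      have h1 : ∀ a : Fin (2 * n), H (i, a) c = 1 := by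
        intro a
        have := hdiag i a c.2
        rw [h]
        have hc : c = (c.1, c.2) := rfl
        rw [hc]
        rw [← h]
        exact hdiag i a c.2
      simp [h1]
    · rw [if_neg h]
      exact (hoff i c.1 h).2 c.2
  -- row Gram sums are preserved
  have main1 : ∀ r r' : Fin (2 * n) × Fin (2 * n),
      ∑ c : Fin (2 * n) × Fin (2 * n), HS r c * HS r' c
        = ∑ c : Fin (2 * n) × Fin (2 * n), H r c * H r' c := by
    intro r r'
    have expand : ∀ c : Fin (2 * n) × Fin (2 * n), HS r c * HS r' c =
        s r.1 * s r'.1 * (H r c * H r' c)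
        + (s r.1 * (if c.1 = r'.1 then 1 - s r'.1 else 0)) * H r c
        + (s r'.1 * (if c.1 = r.1 then 1 - s r.1 else 0)) * H r' c
        + (if c.1 = r.1 then 1 - s r.1 else 0) * (if c.1 = r'.1 then 1 - s r'.1 else 0) := by
      intro c; rw [hkey, hkey]; ring
    rw [Finset.sum_congr rfl (fun c _ => expand c)]
    rw [Finset.sum_add_distrib, Finset.sum_add_distrib, Finset.sum_add_distrib]
    have e1 : ∑ c : Fin (2 * n) × Fin (2 * n), s r.1 * s r'.1 * (H r c * H r' c)
        = s r.1 * s r'.1 * ∑ c : Fin (2 * n) × Fin (2 * n), H r c * H r' c := by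
      rw [Finset.mul_sum]
    have e2 : ∀ (u : Fin (2 * n) × Fin (2 * n)) (z w : ℤ) (k : Fin (2 * n)),
        ∑ c : Fin (2 * n) × Fin (2 * n), (z * (if c.1 = k then w else 0)) * H u c
          = z * w * (if u.1 = k then (2 * n : ℤ) else 0) := by
      intro u z w k
      rw [Fintype.sum_prod_type]
      have inner : ∀ j : Fin (2 * n),
          ∑ b : Fin (2 * n), (z * (if j = k then w else 0)) * H u (j, b)
            = if j = k then z * w * ∑ b : Fin (2 * n), H u (j, b) else 0 := by
        intro j
        by_cases h : j = k
        · rw [if_pos h]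
          simp only [if_pos h]
          rw [← Finset.mul_sum]
        · simp [h]
      rw [Finset.sum_congr rfl (fun j _ => inner j)]
      rw [Finset.sum_ite_eq' Finset.univ k]
      simp [hrowsum u k]
    have e4 : ∑ c : Fin (2 * n) × Fin (2 * n),
        (if c.1 = r.1 then 1 - s r.1 else 0) * (if c.1 = r'.1 then 1 - s r'.1 else 0)
        = if r.1 = r'.1 then (1 - s r.1) * (1 - s r'.1) * (2 * n : ℤ) else 0 := by
      rw [Fintype.sum_prod_type]
      have inner : ∀ j : Fin (2 * n),
          ∑ _b : Fin (2 * n), (if j = r.1 then 1 - s r.1 else 0) * (if j = r'.1 then 1 - s r'.1 else 0)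
            = if j = r.1 then (if r.1 = r'.1 then (1 - s r.1) * (1 - s r'.1) * (2 * n : ℤ) else 0) else 0 := by
        intro j
        rcases eq_or_ne j r.1 with h | h
        · subst h
          rcases eq_or_ne r.1 r'.1 with h' | h'
          · rw [if_pos rfl, if_pos h', if_pos rfl, if_pos h', Finset.sum_const,
              Finset.card_univ, Fintype.card_fin, nsmul_eq_mul]
            push_cast
            ring
          · rw [if_pos rfl, if_neg h', if_pos rfl, if_neg h', mul_zero,
              Finset.sum_const, smul_zero]
        · rw [if_neg h, if_neg h, zero_mul, Finset.sum_const, smul_zero]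
      rw [Finset.sum_congr rfl (fun j _ => inner j)]
      rw [Finset.sum_ite_eq' Finset.univ r.1]
      simp only [Finset.mem_univ, if_true]
    rw [e1, e2 r (s r.1) (1 - s r'.1) r'.1, e2 r' (s r'.1) (1 - s r.1) r.1, e4]
    by_cases h : r.1 = r'.1
    · rw [if_pos h, if_pos h, if_pos h.symm]
      have hss : s r'.1 = s r.1 := by rw [h]
      rw [hss]
      linear_combination (∑ c : Fin (2 * n) × Fin (2 * n), H r c * H r' c - (2 * n : ℤ)) * hs2 r.1
    · -- here the Gram sum is 0 by orthogonality of distinct rows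
      have hne : r ≠ r' := fun e => h (by rw [e])
      have hA : ∑ c : Fin (2 * n) × Fin (2 * n), H r c * H r' c = 0 := by
        have := congrFun (congrFun hrow r) r'
        simpa [Matrix.mul_apply, Matrix.transpose_apply, Matrix.one_apply, hne] using this
      rw [if_neg h, if_neg h, if_neg (fun e => h e.symm), hA]
      ring
  -- column Gram sums are preserved
  have main2 : ∀ c c' : Fin (2 * n) × Fin (2 * n),
      ∑ r : Fin (2 * n) × Fin (2 * n), HS r c * HS r c'
        = ∑ r : Fin (2 * n) × Fin (2 * n), H r c * H r c' := by
    intro c c'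
    have expand : ∀ r : Fin (2 * n) × Fin (2 * n), HS r c * HS r c' =
        (s r.1 * s r.1) * (H r c * H r c')
        + (s r.1 * (if c'.1 = r.1 then 1 - s r.1 else 0)) * H r c
        + (s r.1 * (if c.1 = r.1 then 1 - s r.1 else 0)) * H r c'
        + (if c.1 = r.1 then 1 - s r.1 else 0) * (if c'.1 = r.1 then 1 - s r.1 else 0) := by
      intro r; rw [hkey, hkey]; ring
    have expand' : ∀ r : Fin (2 * n) × Fin (2 * n), HS r c * HS r c' =
        H r c * H r c'
        + (s r.1 * (if c'.1 = r.1 then 1 - s r.1 else 0)) * H r c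
        + (s r.1 * (if c.1 = r.1 then 1 - s r.1 else 0)) * H r c'
        + (if c.1 = r.1 then 1 - s r.1 else 0) * (if c'.1 = r.1 then 1 - s r.1 else 0) := by
      intro r; rw [expand r, hs2 r.1]; ring
    rw [Finset.sum_congr rfl (fun r _ => expand' r)]
    rw [Finset.sum_add_distrib, Finset.sum_add_distrib, Finset.sum_add_distrib]
    have e2 : ∀ (u : Fin (2 * n) × Fin (2 * n)) (k : Fin (2 * n)),
        ∑ r : Fin (2 * n) × Fin (2 * n), (s r.1 * (if k = r.1 then 1 - s r.1 else 0)) * H r u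
          = s k * (1 - s k) * (if k = u.1 then (2 * n : ℤ) else 0) := by
      intro u k
      rw [Fintype.sum_prod_type]
      have inner : ∀ i : Fin (2 * n),
          ∑ a : Fin (2 * n), (s i * (if k = i then 1 - s i else 0)) * H (i, a) u
            = if i = k then s k * (1 - s k) * ∑ a : Fin (2 * n), H (k, a) u else 0 := by
        intro i
        rcases eq_or_ne i k with h | h
        · subst h
          rw [if_pos rfl, if_pos rfl, ← Finset.mul_sum]
        · rw [if_neg (fun e : k = i => h e.symm), if_neg h]
          simp
      rw [Finset.sum_congr rfl (fun i _ => inner i)]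
      rw [Finset.sum_ite_eq' Finset.univ k]
      simp [hcolsum k u]
    have e4 : ∑ r : Fin (2 * n) × Fin (2 * n),
        (if c.1 = r.1 then 1 - s r.1 else 0) * (if c'.1 = r.1 then 1 - s r.1 else 0)
        = if c.1 = c'.1 then (1 - s c.1) * (1 - s c.1) * (2 * n : ℤ) else 0 := by
      rw [Fintype.sum_prod_type]
      have inner : ∀ i : Fin (2 * n),
          ∑ _a : Fin (2 * n), (if c.1 = i then 1 - s i else 0) * (if c'.1 = i then 1 - s i else 0)
            = if i = c.1 then (if c.1 = c'.1 then (1 - s c.1) * (1 - s c.1) * (2 * n : ℤ) else 0) else 0 := by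
        intro i
        rcases eq_or_ne i c.1 with h | h
        · subst h
          rcases eq_or_ne c.1 c'.1 with h' | h'
          · rw [if_pos rfl, if_pos h'.symm, if_pos rfl, if_pos h', Finset.sum_const,
              Finset.card_univ, Fintype.card_fin, nsmul_eq_mul]
            push_cast
            ring
          · rw [if_pos rfl, if_neg (fun e : c'.1 = c.1 => h' e.symm), if_pos rfl, if_neg h',
              mul_zero, Finset.sum_const, smul_zero]
        · rw [if_neg (fun e : c.1 = i => h e.symm), if_neg h, zero_mul,
            Finset.sum_const, smul_zero]
      rw [Finset.sum_congr rfl (fun i _ => inner i)]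
      rw [Finset.sum_ite_eq' Finset.univ c.1]
      simp only [Finset.mem_univ, if_true]
    rw [e2 c c'.1, e2 c' c.1, e4]
    by_cases h : c.1 = c'.1
    · rw [if_pos h.symm, if_pos h, if_pos h]
      have hss : s c'.1 = s c.1 := by rw [h]
      rw [hss]
      linear_combination (- (2 * n : ℤ)) * hs2 c.1
    · rw [if_neg (fun e : c'.1 = c.1 => h e.symm), if_neg h, if_neg h]
      ring
  refine ⟨⟨?_, ?_, ?_⟩, ?_, ?_⟩
  · intro r c
    rw [hHS]
    rcases hpm r c with h | h <;> split <;> simp [h]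
  · ext r r'
    have h1 : (HS * HSᵀ) r r' = ∑ c : Fin (2 * n) × Fin (2 * n), HS r c * HS r' c := by
      simp [Matrix.mul_apply, Matrix.transpose_apply]
    have h2 : (H * Hᵀ) r r' = ∑ c : Fin (2 * n) × Fin (2 * n), H r c * H r' c := by
      simp [Matrix.mul_apply, Matrix.transpose_apply]
    rw [h1, main1, ← h2, hrow]
  · ext c c'
    have h1 : (HSᵀ * HS) c c' = ∑ r : Fin (2 * n) × Fin (2 * n), HS r c * HS r c' := by
      simp [Matrix.mul_apply, Matrix.transpose_apply, mul_comm]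
    have h2 : (Hᵀ * H) c c' = ∑ r : Fin (2 * n) × Fin (2 * n), H r c * H r c' := by
      simp [Matrix.mul_apply, Matrix.transpose_apply, mul_comm]
    rw [h1, main2, ← h2, hcol]
  · intro i a b
    rw [hHS]
    simp only [ne_eq, not_true]
    rw [if_neg (by simp)]
    exact hdiag i a b
  · intro i j hij
    constructor
    · intro a
      have : ∀ b : Fin (2 * n), HS (i, a) (j, b) = s i * H (i, a) (j, b) := by
        intro b
        rw [hkey]
        simp only
        rw [if_neg (fun e : j = i => hij e.symm)]
        ring
      rw [Finset.sum_congr rfl (fun b _ => this b), ← Finset.mul_sum,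
        (hoff i j hij).1 a, mul_zero]
    · intro b
      have : ∀ a : Fin (2 * n), HS (i, a) (j, b) = s i * H (i, a) (j, b) := by
        intro a
        rw [hkey]
        simp only
        rw [if_neg (fun e : j = i => hij e.symm)]
        ring
      rw [Finset.sum_congr rfl (fun a _ => this a), ← Finset.mul_sum,
        (hoff i j hij).2 b, mul_zero]
end
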